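/- arXiv:2503.00886 — 3 statements merged into one kernel-verified Lean document; each statement's English description precedes it below -/
import Mathlib

section
/- Let m be a multisegment and [a,b] a segment; set m₁ = m_{[a,b]} and m_{p+1} = m_p − Ds(m_p). Let a ≤ c ≤ b and p < p′, and suppose both Ds(m_p) and Ds(m_{p′}) contain a (necessarily unique) segment starting at c, say Δ and Δ′ respectively. Then Δ is contained in Δ′. -/
namespace Multiseg

/-- A segment `[a,b]` on a fixed cuspidal line, encoded by its endpoints. -/
abbrev Seg := ℤ × ℤ

/-- A multiset of pairs is a multisegment when each pair is a genuine segment. -/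
def IsMS (m : Multiset Seg) : Prop := ∀ Δ ∈ m, Δ.1 ≤ Δ.2

/-- `Δ ≺ Δ'` : the segment `Δ` precedes `Δ'`. -/
def Prec (Δ Δ' : Seg) : Prop := Δ.1 < Δ'.1 ∧ Δ.2 < Δ'.2 ∧ Δ'.1 ≤ Δ.2 + 1

instance : DecidableRel Prec := fun _ _ => by unfold Prec; infer_instance

/-- `Δ ⊆ Δ'` as segments. -/
def SSub (Δ Δ' : Seg) : Prop := Δ'.1 ≤ Δ.1 ∧ Δ.2 ≤ Δ'.2

/-- `m[i]`, the segments of `m` starting at `i`. -/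
def startAt (m : Multiset Seg) (i : ℤ) : Multiset Seg := m.filter fun Δ => Δ.1 = i

/-- `m⟨i⟩`, the segments of `m` ending at `i`. -/
def endAt (m : Multiset Seg) (i : ℤ) : Multiset Seg := m.filter fun Δ => Δ.2 = i

/-- `m_{[a,b]} = {[a',b'] ∈ m : a ≤ a' ≤ b+1 ≤ b'+1}`. -/
def mRange (m : Multiset Seg) (a b : ℤ) : Multiset Seg :=
  m.filter fun Δ => a ≤ Δ.1 ∧ Δ.1 ≤ b + 1 ∧ b ≤ Δ.2

/-- Add the segment `[x,y]` to `m`, discarding it if it is void. -/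
def pushSeg (m : Multiset Seg) (x y : ℤ) : Multiset Seg :=
  if x ≤ y then m + {(x, y)} else m

def msetMax (s : Multiset ℤ) : Option ℤ :=
  if h : s = 0 then none else some (s.toFinset.max' (Multiset.toFinset_nonempty.mpr h))

def msetMin (s : Multiset ℤ) : Option ℤ :=
  if h : s = 0 then none else some (s.toFinset.min' (Multiset.toFinset_nonempty.mpr h))

/-- The longest segment of `m[i]`, if any. -/
def longStart (m : Multiset Seg) (i : ℤ) : Option Seg :=
  (msetMax ((startAt m i).map Prod.snd)).map fun y => (i, y)

/-- The shortest segment of `m[i]`, if any. -/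
def shortStart (m : Multiset Seg) (i : ℤ) : Option Seg :=
  (msetMin ((startAt m i).map Prod.snd)).map fun y => (i, y)

/-- The longest segment of `m⟨i⟩`, if any. -/
def longEnd (m : Multiset Seg) (i : ℤ) : Option Seg :=
  (msetMin ((endAt m i).map Prod.fst)).map fun x => (x, i)

/-- The shortest segment of `m⟨i⟩`, if any. -/
def shortEnd (m : Multiset Seg) (i : ℤ) : Option Seg :=
  (msetMax ((endAt m i).map Prod.fst)).map fun x => (x, i)

/-- One removal step of the `tds(·,c)` process: remove the longest segment `Δ''`
of `m[c+1]` and the longest segment `Δ'` of `m[c]` with `Δ' ≺ Δ''`. -/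
def tdsStep (m : Multiset Seg) (c : ℤ) : Option (Multiset Seg) :=
  match longStart m (c + 1) with
  | none => none
  | some Δ'' =>
    match msetMax (((startAt m c).filter fun Δ => Prec Δ Δ'').map Prod.snd) with
    | none => none
    | some y => some ((m.erase (c, y)).erase Δ'')

def tdsIterF (c : ℤ) : ℕ → Multiset Seg → Multiset Seg
  | 0, m => m
  | n + 1, m =>
    match tdsStep m c with
    | none => m
    | some m' => tdsIterF c n m'

/-- Iterate the `tds(·,c)` process until it terminates. -/
def tdsIter (c : ℤ) (m : Multiset Seg) : Multiset Seg := tdsIterF c m.card m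

/-- The `ρ`-derivative algorithm `𝒟_{[a]}`; the value `none` codes `∞`. -/
def Drho (a : ℤ) (m : Multiset Seg) : Option (Multiset Seg) :=
  (shortStart (tdsIter a m) a).map fun Δ => pushSeg (m.erase Δ) (a + 1) Δ.2

/-- `ε_{[a]}(m)`, the number of segments starting at `a` left after the
`tds(·,a)` process terminates. -/
def epsA (a : ℤ) (m : Multiset Seg) : ℕ := (startAt (tdsIter a m) a).card

/-- The next element of an upward sequence after `p`. -/
def usNext (n : Multiset Seg) (p : Seg) : Option Seg :=
  match msetMin ((n.filter fun Δ => Prec p Δ).map Prod.fst) with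
  | none => none
  | some aj =>
    (msetMax ((((n.filter fun Δ => Prec p Δ).filter fun Δ => Δ.1 = aj)).map Prod.snd)).map
      fun y => (aj, y)

def usAux (n : Multiset Seg) : ℕ → Seg → List Seg
  | 0, _ => []
  | fuel + 1, p =>
    match usNext n p with
    | none => []
    | some Δ => Δ :: usAux n fuel Δ

/-- The upward sequence `Us(n)` of maximally linked segments of `n`. -/
def usList (n : Multiset Seg) : List Seg :=
  match msetMin (n.map Prod.fst) with
  | none => []
  | some a1 =>
    match longStart n a1 with
    | none => []
    | some Δ1 => Δ1 :: usAux n n.card Δ1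

/-- The decomposition of a multisegment into successive upward sequences. -/
def usDecomp : ℕ → Multiset Seg → List (List Seg)
  | 0, _ => []
  | fuel + 1, n =>
    if n = 0 then [] else usList n :: usDecomp fuel (n - (usList n : Multiset Seg))

/-- `[x,y] ⊆ [u,v]` (with the void interval contained in anything). -/
def intSubB (x y u v : ℤ) : Bool := decide (y < x) || (decide (u ≤ x) && decide (y ≤ v))

/-- Find, in a row of an upward-sequence decomposition, the first segment `Δ`
whose removable free section contains `[s(Δ), top]`. -/
def findRowD : List Seg → ℤ → Option Seg
  | [], _ => none
  | [Δ], top => if intSubB Δ.1 top Δ.1 Δ.2 then some Δ else none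
  | Δ :: Δ' :: rest, top =>
    if intSubB Δ.1 top Δ.1 (Δ'.1 - 2) then some Δ else findRowD (Δ' :: rest) top

/-- The selection step of the Langlands derivative algorithm, scanning the rows
downwards from the last one; it records each selected segment together with the
start of its truncation. -/
def selAuxD (rows : List (List Seg)) : ℕ → ℤ → List (Seg × ℤ)
  | 0, _ => []
  | n + 1, top =>
    match findRowD (rows.getD n []) top with
    | some Δ => (Δ, top + 1) :: selAuxD rows n (Δ.1 - 1)
    | none => selAuxD rows n top

/-- The Langlands derivative algorithm `𝒟^Lang_{[a,b]}`; `none` codes `∞`. -/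
def DLang (a b : ℤ) (m : Multiset Seg) : Option (Multiset Seg) :=
  let m1 := mRange m a b
  let rows := usDecomp m1.card m1
  let sel := selAuxD rows rows.length b
  match sel.getLast? with
  | none => none
  | some (Δl, _) =>
    if Δl.1 = a then
      some (sel.foldl (fun acc p => pushSeg (acc.erase p.1) p.2 p.1.2) m)
    else none

/-- One removal step of the `tus(·,c)` process. -/
def tusStep (n : Multiset Seg) (c : ℤ) : Option (Multiset Seg) :=
  match shortStart n c with
  | none => none
  | some Δ' =>
    match msetMin (((startAt n (c + 1)).filter fun Δ => Prec Δ' Δ).map Prod.snd) with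
    | none => none
    | some y => some ((n.erase Δ').erase (c + 1, y))

def tusIterF (c : ℤ) : ℕ → Multiset Seg → Multiset Seg
  | 0, n => n
  | k + 1, n =>
    match tusStep n c with
    | none => n
    | some n' => tusIterF c k n'

/-- Iterate the `tus(·,c)` process until it terminates. -/
def tusIter (c : ℤ) (n : Multiset Seg) : Multiset Seg := tusIterF c n.card n

/-- The `ρ`-integral algorithm `ℐ_{[a]}` (always defined). -/
def Irho (a : ℤ) (n : Multiset Seg) : Multiset Seg :=
  match longStart (tusIter a n) (a + 1) with
  | none => n + {(a, a)}
  | some Δ => pushSeg (n.erase Δ) a Δ.2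

/-- The next element of a downward sequence after `p`. -/
def dsNext (n : Multiset Seg) (p : Seg) : Option Seg :=
  match msetMax ((n.filter fun Δ => Prec Δ p).map Prod.fst) with
  | none => none
  | some aq => shortStart n aq

def dsAux (n : Multiset Seg) : ℕ → Seg → List Seg
  | 0, _ => []
  | k + 1, p =>
    match dsNext n p with
    | none => []
    | some Δ => Δ :: dsAux n k Δ

/-- The downward sequence `Ds(n)` of minimal linked segments with the largest
starting. -/
def dsList (n : Multiset Seg) : List Seg :=
  match msetMax (n.map Prod.fst) with
  | none => []
  | some a1 =>
    match shortStart n a1 with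
    | none => []
    | some Δ1 => Δ1 :: dsAux n n.card Δ1

/-- The decomposition of a multisegment into successive downward sequences. -/
def dsDecomp : ℕ → Multiset Seg → List (List Seg)
  | 0, _ => []
  | k + 1, n =>
    if n = 0 then [] else dsList n :: dsDecomp k (n - (dsList n : Multiset Seg))

/-- Find, in a row of a downward-sequence decomposition, the segment whose set
of addable free points contains `pt`. -/
def findRowI (a : ℤ) : List Seg → ℤ → Option Seg
  | [], _ => none
  | [Δ], pt => if decide (a ≤ pt) && decide (pt ≤ Δ.1 - 1) then some Δ else none
  | Δ :: Δ' :: rest, pt =>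
    if decide (Δ'.1 + 1 ≤ pt) && decide (pt ≤ Δ.1 - 1) then some Δ
    else findRowI a (Δ' :: rest) pt

/-- The selection step of the Langlands integral algorithm; it records each
selected segment together with the start of its extension. -/
def selAuxI (a : ℤ) (rows : List (List Seg)) : ℕ → ℤ → List (Seg × ℤ)
  | 0, _ => []
  | n + 1, pt =>
    match findRowI a (rows.getD n []) pt with
    | some Δ => (Δ, pt) :: selAuxI a rows n Δ.1
    | none => selAuxI a rows n pt

/-- The Langlands integral algorithm `ℐ^Lang_{[a,b]}`. -/
def ILang (a b : ℤ) (m : Multiset Seg) : Multiset Seg :=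
  let m1 := mRange m a b
  let rows := dsDecomp m1.card m1
  let sel := selAuxI a rows rows.length a
  let base := sel.foldl (fun acc p => pushSeg (acc.erase p.1) p.2 p.1.2) m
  match sel.getLast? with
  | none => pushSeg base a b
  | some (Δl, _) => pushSeg base Δl.1 b

/-- `m` is in good range for `[a,b]`. -/
def GoodRange (m : Multiset Seg) (a b : ℤ) : Prop := mRange m a b = m

/-- `Θ`, the Gelfand–Kazhdan involution on multisegments. -/
def Theta (m : Multiset Seg) : Multiset Seg := m.map fun Δ => (-Δ.2, -Δ.1)

/-- The exotic duality `𝔻_r`. -/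
def Dual (r : ℤ) (m : Multiset Seg) : Multiset Seg :=
  m.map fun Δ => (-r + Δ.2 + 1, Δ.1 - 1)

/-- `𝔻_r^{[a,b]}`. -/
def DualAB (r a b : ℤ) (m : Multiset Seg) : Multiset Seg := Dual r m + {(b - r + 1, b)}

/-- The left Langlands derivative algorithm `𝒟^{Lang,L}_{[a,b]}`. -/
def DLangL (a b : ℤ) (m : Multiset Seg) : Option (Multiset Seg) :=
  (DLang (-b) (-a) (Theta m)).map Theta

/-- The left `ρ`-derivative algorithm `𝒟^{Lang,L}_{[a]}`. -/
def DrhoL (a : ℤ) (m : Multiset Seg) : Option (Multiset Seg) :=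
  (Drho (-a) (Theta m)).map Theta

/-- The next segment chosen by the MW algorithm after `p`. -/
def mwNext (m : Multiset Seg) (p : Seg) : Option Seg :=
  (msetMax (((endAt m (p.2 - 1)).filter fun Δ => Prec Δ p).map Prod.fst)).map
    fun x => (x, p.2 - 1)

def mwAux (m : Multiset Seg) : ℕ → Seg → List Seg
  | 0, _ => []
  | k + 1, p =>
    match mwNext m p with
    | none => []
    | some Δ => Δ :: mwAux m k Δ

/-- The ordered segments participating in the MW algorithm for `m`. -/
def mwList (m : Multiset Seg) : List Seg :=
  match msetMax (m.map Prod.snd) with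
  | none => []
  | some b0 =>
    match shortEnd m b0 with
    | none => []
    | some Δ0 => Δ0 :: mwAux m m.card Δ0

/-- `𝒟^MW(m)`. -/
def DMW (m : Multiset Seg) : Multiset Seg :=
  (mwList m).foldl (fun acc Δ => pushSeg (acc.erase Δ) Δ.1 (Δ.2 - 1)) m

/-- The first segment `Δ(m)` produced by the MW algorithm for `m`. -/
def mwFirstSeg (m : Multiset Seg) : Option Seg :=
  match (mwList m).head?, (mwList m).getLast? with
  | some Δ0, some Δk => some (Δk.1, Δ0.2)
  | _, _ => none

/-- The total relative length of a multisegment. -/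
def totalLen (m : Multiset Seg) : ℕ := (m.map fun Δ => (Δ.2 - Δ.1 + 1).toNat).sum

def sharpAux : ℕ → Multiset Seg → Multiset Seg
  | 0, _ => 0
  | k + 1, m =>
    if m = 0 then 0
    else
      match mwFirstSeg m with
      | none => 0
      | some Δ => Δ ::ₘ sharpAux k (DMW m)

/-- The Mœglin–Waldspurger involution `m^#`. -/
def msharp (m : Multiset Seg) : Multiset Seg := sharpAux (totalLen m) m

/-- `ε^MW_{[a,c]}(m)`, the multiplicity of `[a,c]` in `m^#`. -/
def epsMW (a c : ℤ) (m : Multiset Seg) : ℕ := (msharp m).count (a, c)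

/-- `m_i`: remove from `m` the participants of the first `i` runs of the MW
algorithm. -/
def mwStage (m : Multiset Seg) : ℕ → Multiset Seg
  | 0 => m
  | i + 1 => mwStage m i - (mwList (DMW^[i] m) : Multiset Seg)

/-- `MW_k(m)`: all segments ending at `k` participating in the first `r` runs
of the MW algorithm. -/
def MWkSet (m : Multiset Seg) (r : ℕ) (k : ℤ) : Multiset Seg :=
  ∑ i ∈ Finset.range r, (mwList (DMW^[i] m) : Multiset Seg).filter fun Δ => Δ.2 = k

def upNbrAux (m : Multiset Seg) : ℕ → Seg → Option (List Seg)
  | 0, p => some [p]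
  | k + 1, p =>
    match msetMin (((endAt m (p.2 + 1)).filter fun Δ => Prec p Δ).map Prod.fst) with
    | none => none
    | some x => (upNbrAux m k (x, p.2 + 1)).map fun l => p :: l

/-- The removal upward sequence of maximal linked segments in neighbors on `m`
ranging from `a-1` to `b` (if it exists). -/
def upSeqNbr (m : Multiset Seg) (a b : ℤ) : Option (List Seg) :=
  match longEnd m (a - 1) with
  | none => none
  | some Δ => upNbrAux m (b - (a - 1)).toNat Δ

def zelRemF (a b : ℤ) : ℕ → Multiset Seg → Multiset Seg
  | 0, m => m
  | k + 1, m =>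
    match upSeqNbr m a b with
    | none => m
    | some l => zelRemF a b k (m - (l : Multiset Seg))

/-- Repeatedly remove removal upward sequences of maximal linked segments in
neighbors ranging from `a-1` to `b`, until none exists. -/
def zelRem (a b : ℤ) (m : Multiset Seg) : Multiset Seg := zelRemF a b m.card m

def zelRemCountF (a b : ℤ) : ℕ → Multiset Seg → ℕ
  | 0, _ => 0
  | k + 1, m =>
    match upSeqNbr m a b with
    | none => 0
    | some l => zelRemCountF a b k (m - (l : Multiset Seg)) + 1

/-- The number of removal upward sequences of maximal linked segments in
neighbors ranging from `a-1` to `b` successively removed from `m`. -/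
def zelRemCount (a b : ℤ) (m : Multiset Seg) : ℕ := zelRemCountF a b m.card m

def downNbrAux (m : Multiset Seg) : ℕ → Seg → Option (List Seg)
  | 0, p => some [p]
  | k + 1, p =>
    match msetMax (((endAt m (p.2 - 1)).filter fun Δ => Prec Δ p).map Prod.fst) with
    | none => none
    | some x => (downNbrAux m k (x, p.2 - 1)).map fun l => p :: l

/-- The Zelevinsky derivative algorithm `𝒟^Zel_{[a,b]}`; `none` codes `∞`. -/
def DZel (a b : ℤ) (m : Multiset Seg) : Option (Multiset Seg) :=
  match shortEnd (zelRem a b m) b with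
  | none => none
  | some Δb =>
    match downNbrAux (zelRem a b m) (b - a).toNat Δb with
    | none => none
    | some l => some (l.foldl (fun acc Δ => pushSeg (acc.erase Δ) Δ.1 (Δ.2 - 1)) m)

/-- The downward sequence of minimal linked segments in neighbors on `m`
ranging from `b` to `a-1` (if it exists). -/
def downSeqNbr (m : Multiset Seg) (a b : ℤ) : Option (List Seg) :=
  match shortEnd m b with
  | none => none
  | some Δ => downNbrAux m (b - (a - 1)).toNat Δ

def izRemF (a b : ℤ) : ℕ → Multiset Seg → Multiset Seg
  | 0, m => m
  | k + 1, m =>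
    match downSeqNbr m a b with
    | none => m
    | some l => izRemF a b k (m - (l : Multiset Seg))

/-- Repeatedly remove downward sequences of minimal linked segments in
neighbors ranging from `b` to `a-1`, until none exists. -/
def izRem (a b : ℤ) (m : Multiset Seg) : Multiset Seg := izRemF a b m.card m

def extNext (m : Multiset Seg) (p : Seg) : Option Seg :=
  (msetMin (((endAt m (p.2 + 1)).filter fun Δ => Prec p Δ).map Prod.fst)).map
    fun x => (x, p.2 + 1)

def extAux (m : Multiset Seg) : ℕ → Option Seg → List (Option Seg)
  | 0, _ => []
  | k + 1, p =>
    let cur := p.bind (extNext m)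
    cur :: extAux m k cur

/-- The (possibly void) segments `Δ̃_{a-1}, …, Δ̃_{b-1}` participating in the
extension process of the Zelevinsky integral algorithm on `m`. -/
def extList (m : Multiset Seg) (a b : ℤ) : List (Option Seg) :=
  longEnd m (a - 1) :: extAux m (b - a).toNat (longEnd m (a - 1))

def applyExt : Multiset Seg → ℤ → List (Option Seg) → Multiset Seg
  | acc, _, [] => acc
  | acc, i, some Δ :: rest => applyExt (pushSeg (acc.erase Δ) Δ.1 (Δ.2 + 1)) (i + 1) rest
  | acc, i, none :: rest => applyExt (acc + {(i + 1, i + 1)}) (i + 1) rest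

/-- The Zelevinsky integral algorithm `ℐ^Zel_{[a,b]}`. -/
def IZel (a b : ℤ) (m : Multiset Seg) : Multiset Seg :=
  applyExt m (a - 1) (extList (izRem a b m) a b)

/-- `Δ̃⁺` for a possibly void `Δ̃` at position `i` (for the void segment at
position `i` this is the singleton `[i+1,i+1]`). -/
def plusAt (i : ℤ) : Option Seg → Seg
  | some Δ => (Δ.1, Δ.2 + 1)
  | none => (i + 1, i + 1)

def plusList : ℤ → List (Option Seg) → List Seg
  | _, [] => []
  | i, o :: rest => plusAt i o :: plusList (i + 1) rest

/-- `n₁` and `n₂` are linked by mapping: there is an injective map `f : n₁ → n₂`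
with `Δ ≺ f(Δ)` for all `Δ ∈ n₁`. -/
def LinkedByMapping (n₁ n₂ : Multiset Seg) : Prop :=
  ∃ n₂' ≤ n₂, Multiset.Rel Prec n₁ n₂'

def startsSorted (n : Multiset Seg) : List ℤ := (n.map Prod.fst).sort (· ≤ ·)

/-- `n₁' < n₁` for multisegments of segments ending at a common point, compared
via their sorted lists of starting points. -/
def MSLtStarts (n₁' n₁ : Multiset Seg) : Prop :=
  startsSorted n₁' ≠ startsSorted n₁ ∧
    List.Forall₂ (· ≤ ·) (startsSorted n₁) (startsSorted n₁')

/-- `n₁ ⊆ m⟨k-1⟩` and `n₂ ⊆ m⟨k⟩` are minimally linked in `m`. -/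
def MinLinked (m : Multiset Seg) (k : ℤ) (n₁ n₂ : Multiset Seg) : Prop :=
  n₁ ≤ endAt m (k - 1) ∧ n₂ ≤ endAt m k ∧ LinkedByMapping n₁ n₂ ∧
    (∀ n₁' ≤ endAt m (k - 1), LinkedByMapping n₁' n₂ → n₁'.card ≤ n₁.card) ∧
    (∀ n₁' ≤ endAt m (k - 1), n₁'.card = n₁.card → MSLtStarts n₁' n₁ →
      ¬LinkedByMapping n₁' n₂)

/-- The non-free sections of a row of an upward-sequence decomposition. -/
def nfRow : List Seg → Multiset Seg
  | [] => 0
  | [_] => 0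
  | Δ :: Δ' :: rest => pushSeg (nfRow (Δ' :: rest)) (Δ'.1 - 1) Δ.2

/-- `𝔡(m)`, the sum of all non-free sections. -/
def frakd (m : Multiset Seg) : Multiset Seg :=
  (usDecomp m.card m).foldl (fun acc row => acc + nfRow row) 0

def DrhoPow (t : ℤ) : ℕ → Multiset Seg → Option (Multiset Seg)
  | 0, m => some m
  | k + 1, m => (Drho t m).bind (DrhoPow t k)

/-- `(𝒟_{[a+n-1]})^{ε_{a+n-1}} ∘ ⋯ ∘ (𝒟_{[a]})^{ε_a}(m)` where at each stage `t`
the exponent is `ε_t = ε_{[t]}` of the current multisegment; `none` codes that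
some derivative in the composition is `∞`. -/
def hdComp : ℕ → ℤ → Multiset Seg → Option (Multiset Seg)
  | 0, _, m => some m
  | k + 1, t, m =>
    match DrhoPow t (epsA t m) m with
    | none => none
    | some m' => hdComp k (t + 1) m'

/-!
Each row of the decomposition is a downward sequence of what remains once the earlier rows are
removed, so every segment of a later row was still available when an earlier row was formed.
A downward sequence picks, at each starting point it visits, a shortest segment with that start;
hence a segment of a later row starting at `c` ends no earlier than the one of an earlier row.
-/

def IsShortestStart (n : Multiset Seg) (Δ : Seg) : Prop :=
  Δ ∈ n ∧ ∀ Δ' ∈ n, Δ'.1 = Δ.1 → Δ.2 ≤ Δ'.2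

lemma msetMin_eq_some {s : Multiset ℤ} {x : ℤ} (h : msetMin s = some x) :
    x ∈ s ∧ ∀ y ∈ s, x ≤ y := by
  unfold msetMin at h
  split_ifs at h
  cases h
  exact ⟨Multiset.mem_toFinset.mp (Finset.min'_mem _ _),
    fun y hy => Finset.min'_le _ _ (Multiset.mem_toFinset.mpr hy)⟩

lemma shortStart_eq_some {n : Multiset Seg} {c : ℤ} {Δ : Seg}
    (h : shortStart n c = some Δ) : Δ.1 = c ∧ IsShortestStart n Δ := by
  obtain ⟨y, hy, rfl⟩ := Option.map_eq_some_iff.mp h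
  obtain ⟨hmem, hle⟩ := msetMin_eq_some hy
  obtain ⟨Δ₀, hΔ₀, rfl⟩ := Multiset.mem_map.mp hmem
  obtain ⟨hΔ₀n, rfl⟩ := Multiset.mem_filter.mp hΔ₀
  exact ⟨rfl, hΔ₀n, fun Δ' hΔ' hc =>
    hle _ (Multiset.mem_map_of_mem _ (Multiset.mem_filter.mpr ⟨hΔ', hc⟩))⟩

lemma isShortestStart_of_dsNext {n : Multiset Seg} {p Δ : Seg} (h : dsNext n p = some Δ) :
    IsShortestStart n Δ := by
  unfold dsNext at h
  split at h
  · cases h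
  · exact (shortStart_eq_some h).2

lemma isShortestStart_of_mem_dsAux {n : Multiset Seg} {k : ℕ} {p Δ : Seg}
    (h : Δ ∈ dsAux n k p) : IsShortestStart n Δ := by
  induction k generalizing p with
  | zero => cases h
  | succ k ih =>
    rw [dsAux] at h
    split at h
    · cases h
    · rename_i Δ₀ hnext
      rcases List.mem_cons.mp h with rfl | h
      · exact isShortestStart_of_dsNext hnext
      · exact ih h

lemma isShortestStart_of_mem_dsList {n : Multiset Seg} {Δ : Seg} (h : Δ ∈ dsList n) :
    IsShortestStart n Δ := by
  unfold dsList at h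
  split at h
  · cases h
  · split at h
    · cases h
    · rename_i Δ₁ hshort
      rcases List.mem_cons.mp h with rfl | h
      · exact (shortStart_eq_some hshort).2
      · exact isShortestStart_of_mem_dsAux h

lemma mem_of_mem_dsDecomp {k q : ℕ} {n : Multiset Seg} {Δ : Seg}
    (h : Δ ∈ (dsDecomp k n).getD q []) : Δ ∈ n := by
  induction k generalizing n q with
  | zero => cases h
  | succ k ih =>
    rw [dsDecomp] at h
    split_ifs at h
    · cases h
    · cases q with
      | zero => exact (isShortestStart_of_mem_dsList h).1
      | succ q => exact Multiset.mem_of_le tsub_le_self (ih h)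

lemma snd_le_of_mem_dsDecomp {k p p' : ℕ} {n : Multiset Seg} (hpp : p < p') {Δ Δ' : Seg}
    (hΔ : Δ ∈ (dsDecomp k n).getD p []) (hΔ' : Δ' ∈ (dsDecomp k n).getD p' [])
    (hs : Δ'.1 = Δ.1) : Δ.2 ≤ Δ'.2 := by
  induction k generalizing n p p' with
  | zero => cases hΔ
  | succ k ih =>
    rw [dsDecomp] at hΔ hΔ'
    split_ifs at hΔ hΔ'
    · cases hΔ
    · obtain ⟨q', rfl⟩ := Nat.exists_eq_add_one_of_ne_zero (Nat.ne_zero_of_lt hpp)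
      cases p with
      | zero =>
        exact (isShortestStart_of_mem_dsList hΔ).2 Δ'
          (Multiset.mem_of_le tsub_le_self (mem_of_mem_dsDecomp hΔ')) hs
      | succ q => exact ih (Nat.succ_lt_succ_iff.mp hpp) hΔ hΔ'

theorem stmt15_general (m : Multiset Seg) (a b : ℤ)
    (p p' : ℕ) (hpp : p < p')
    (c : ℤ)
    (Δ Δ' : Seg)
    (hΔ : Δ ∈ (dsDecomp (mRange m a b).card (mRange m a b)).getD p [])
    (hΔ' : Δ' ∈ (dsDecomp (mRange m a b).card (mRange m a b)).getD p' [])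
    (hs : Δ.1 = c) (hs' : Δ'.1 = c) :
    SSub Δ Δ' :=
  ⟨(hs'.trans hs.symm).le, snd_le_of_mem_dsDecomp hpp hΔ hΔ' (hs'.trans hs.symm)⟩

/-- in the decomposition of `m_{[a,b]}` into downward sequences,
if rows `p < p'` both contain a segment starting at `c`, then the one in the
earlier row is contained in the one in the later row. -/
theorem stmt15 (m : Multiset Seg) (hm : IsMS m) (a b : ℤ) (hab : a ≤ b)
    (p p' : ℕ) (hpp : p < p')
    (hlt : p' < (dsDecomp (mRange m a b).card (mRange m a b)).length)
    (c : ℤ) (hc1 : a ≤ c) (hc2 : c ≤ b)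
    (Δ Δ' : Seg)
    (hΔ : Δ ∈ (dsDecomp (mRange m a b).card (mRange m a b)).getD p [])
    (hΔ' : Δ' ∈ (dsDecomp (mRange m a b).card (mRange m a b)).getD p' [])
    (hs : Δ.1 = c) (hs' : Δ'.1 = c) :
    SSub Δ Δ' :=
  stmt15_general m a b p p' hpp c Δ Δ' hΔ hΔ' hs hs'

end Multiseg
end

section
/- Let m be a nonempty multisegment whose largest end is c, and fix an integer b ≤ c. Suppose there is no downward sequence of minimal linked segments in neighbors on m ranging from c to b−1. Let Δ̃_{b−1}, …, Δ̃_{c−1} be the (possibly void) segments participating in the extension process for I^Zel_{[b,c]}(m) (so these are chosen directly from m, and I^Zel_{[b,c]}(m) = m − Σ_{i=b−1}^{c−1} Δ̃_i + Σ_{i=b−1}^{c−1} Δ̃_i⁺). Then the ordered segments participating in the MW algorithm for I^Zel_{[b,c]}(m) are exactly Δ̃_{c−1}⁺, Δ̃_{c−2}⁺, …, Δ̃_{b−1}⁺. -/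
namespace Multiseg

/-!
Since no downward sequence can be removed, `ℐ^Zel_{[b,c]}(m) = m - ∑ Δ̃_i + ∑ Δ̃_i⁺`. Write
`P_j = Δ̃_{b-1+j}⁺` (`extPlus m b j`), which ends at `b+j`; then `P_0 ≺ ⋯ ≺ P_{c-b}`. Each
`Δ̃_{i+1}` is the longest segment of `m⟨i+1⟩` preceded by `Δ̃_i`, so no other segment of `m⟨b+j⟩`
preceding `P_{j+1}` starts after `P_j`; and `Δ̃_{b-1}` is the longest segment of `m⟨b-1⟩`, so
nothing there precedes `P_0`. At the top, a segment of `m⟨c⟩` starting after `P_{c-b}` would extend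
`Δ̃_{b-1} ≺ ⋯ ≺ Δ̃_{c-1}` to a downward sequence of minimal linked segments from `c` to `b-1`, which
is excluded. Hence the MW algorithm picks exactly `P_{c-b}, …, P_0`.
-/

theorem msetMax_eq_some_iff {s : Multiset ℤ} {x : ℤ} :
    msetMax s = some x ↔ x ∈ s ∧ ∀ y ∈ s, y ≤ x := by
  unfold msetMax
  split_ifs with h
  · simp [h]
  · simp only [Option.some.injEq, Finset.max'_eq_iff, Multiset.mem_toFinset]

theorem msetMin_eq_some_iff {s : Multiset ℤ} {x : ℤ} :
    msetMin s = some x ↔ x ∈ s ∧ ∀ y ∈ s, x ≤ y := by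
  unfold msetMin
  split_ifs with h
  · simp [h]
  · simp only [Option.some.injEq, Finset.min'_eq_iff, Multiset.mem_toFinset]

theorem msetMax_eq_none_iff {s : Multiset ℤ} : msetMax s = none ↔ s = 0 := by
  unfold msetMax; split_ifs <;> simp_all

theorem msetMin_eq_none_iff {s : Multiset ℤ} : msetMin s = none ↔ s = 0 := by
  unfold msetMin; split_ifs <;> simp_all

section SelectAtEnd

variable {s : Multiset Seg} {i : ℤ}

theorem map_msetMax_fst_eq_some_iff (hs : ∀ q ∈ s, q.2 = i) {Δ : Seg} :
    (msetMax (s.map Prod.fst)).map (fun x => (x, i)) = some Δ ↔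
      Δ ∈ s ∧ ∀ q ∈ s, q.1 ≤ Δ.1 := by
  simp only [Option.map_eq_some_iff, msetMax_eq_some_iff, Multiset.forall_mem_map_iff]
  constructor
  · rintro ⟨x, ⟨hx, hmax⟩, rfl⟩
    obtain ⟨q, hq, rfl⟩ := Multiset.mem_map.mp hx
    exact ⟨by rwa [← hs q hq], hmax⟩
  · rintro ⟨hΔ, hmax⟩
    exact ⟨Δ.1, ⟨Multiset.mem_map_of_mem _ hΔ, hmax⟩, by rw [← hs Δ hΔ]⟩

theorem map_msetMin_fst_eq_some_iff (hs : ∀ q ∈ s, q.2 = i) {Δ : Seg} :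
    (msetMin (s.map Prod.fst)).map (fun x => (x, i)) = some Δ ↔
      Δ ∈ s ∧ ∀ q ∈ s, Δ.1 ≤ q.1 := by
  simp only [Option.map_eq_some_iff, msetMin_eq_some_iff, Multiset.forall_mem_map_iff]
  constructor
  · rintro ⟨x, ⟨hx, hmin⟩, rfl⟩
    obtain ⟨q, hq, rfl⟩ := Multiset.mem_map.mp hx
    exact ⟨by rwa [← hs q hq], hmin⟩
  · rintro ⟨hΔ, hmin⟩
    exact ⟨Δ.1, ⟨Multiset.mem_map_of_mem _ hΔ, hmin⟩, by rw [← hs Δ hΔ]⟩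

end SelectAtEnd

theorem mem_endAt {m : Multiset Seg} {Δ : Seg} {i : ℤ} : Δ ∈ endAt m i ↔ Δ ∈ m ∧ Δ.2 = i :=
  Multiset.mem_filter

section Selections

variable {m : Multiset Seg} {i : ℤ} {Δ p : Seg}

theorem shortEnd_eq_some_iff :
    shortEnd m i = some Δ ↔ Δ ∈ m ∧ Δ.2 = i ∧ ∀ q ∈ m, q.2 = i → q.1 ≤ Δ.1 := by
  rw [shortEnd, map_msetMax_fst_eq_some_iff fun q hq => (mem_endAt.mp hq).2]
  simp only [mem_endAt, and_imp, and_assoc]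

theorem exists_shortEnd_eq_some (h : ∃ q ∈ m, q.2 = i) : ∃ Δ, shortEnd m i = some Δ := by
  obtain ⟨q, hq, rfl⟩ := h
  rw [← Option.isSome_iff_exists, shortEnd, Option.isSome_map, Option.isSome_iff_ne_none,
    ne_eq, msetMax_eq_none_iff, Multiset.map_eq_zero]
  exact fun h0 => Multiset.eq_zero_iff_forall_notMem.mp h0 q (mem_endAt.mpr ⟨hq, rfl⟩)

theorem longEnd_eq_some_iff :
    longEnd m i = some Δ ↔ Δ ∈ m ∧ Δ.2 = i ∧ ∀ q ∈ m, q.2 = i → Δ.1 ≤ q.1 := by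
  rw [longEnd, map_msetMin_fst_eq_some_iff fun q hq => (mem_endAt.mp hq).2]
  simp only [mem_endAt, and_imp, and_assoc]

theorem longEnd_eq_none_iff : longEnd m i = none ↔ ∀ q ∈ m, q.2 ≠ i := by
  rw [longEnd, Option.map_eq_none_iff, msetMin_eq_none_iff, Multiset.map_eq_zero, endAt,
    Multiset.filter_eq_nil]

theorem extNext_eq_some_iff :
    extNext m p = some Δ ↔ Δ ∈ m ∧ Δ.2 = p.2 + 1 ∧ Prec p Δ ∧
      ∀ q ∈ m, q.2 = p.2 + 1 → Prec p q → Δ.1 ≤ q.1 := by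
  rw [extNext, map_msetMin_fst_eq_some_iff fun q hq =>
    (mem_endAt.mp (Multiset.mem_of_mem_filter hq)).2]
  simp only [Multiset.mem_filter, mem_endAt, and_imp, and_assoc]

theorem extNext_eq_none_iff :
    extNext m p = none ↔ ∀ q ∈ m, q.2 = p.2 + 1 → ¬Prec p q := by
  rw [extNext, Option.map_eq_none_iff, msetMin_eq_none_iff, Multiset.map_eq_zero,
    Multiset.filter_eq_nil]
  simp only [mem_endAt, and_imp]

theorem mwNext_eq_some_iff :
    mwNext m p = some Δ ↔ Δ ∈ m ∧ Δ.2 = p.2 - 1 ∧ Prec Δ p ∧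
      ∀ q ∈ m, q.2 = p.2 - 1 → Prec q p → q.1 ≤ Δ.1 := by
  rw [mwNext, map_msetMax_fst_eq_some_iff fun q hq =>
    (mem_endAt.mp (Multiset.mem_of_mem_filter hq)).2]
  simp only [Multiset.mem_filter, mem_endAt, and_imp, and_assoc]

theorem mwNext_eq_none_iff :
    mwNext m p = none ↔ ∀ q ∈ m, q.2 = p.2 - 1 → ¬Prec q p := by
  rw [mwNext, Option.map_eq_none_iff, msetMax_eq_none_iff, Multiset.map_eq_zero,
    Multiset.filter_eq_nil]
  simp only [mem_endAt, and_imp]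

end Selections

theorem prec_iff_fst_lt {Δ p : Seg} (hend : Δ.2 + 1 = p.2) (hp : p.1 ≤ p.2) :
    Prec Δ p ↔ Δ.1 < p.1 := by
  unfold Prec; omega

section MWChain

variable {m : Multiset Seg} {P : ℕ → Seg}

theorem mwAux_eq_of_chain (hbot : mwNext m (P 0) = none) :
    ∀ {n fuel : ℕ}, (∀ j < n, mwNext m (P (j + 1)) = some (P j)) → n ≤ fuel →
      mwAux m fuel (P n) = ((List.range n).map P).reverse := by
  intro n
  induction n with
  | zero =>
    rintro (_ | fuel) - -
    · rfl
    · simp [mwAux, hbot]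
  | succ n ih =>
    rintro (_ | fuel) hnext hfuel
    · omega
    · have hrest := ih (fun j hj => hnext j (by omega)) (Nat.le_of_succ_le_succ hfuel)
      simp [mwAux, hnext n n.lt_succ_self, hrest, List.range_succ]

theorem mwList_eq_of_chain {e : ℤ} {n : ℕ} (hmax : msetMax (m.map Prod.snd) = some e)
    (htop : shortEnd m e = some (P n)) (hnext : ∀ j < n, mwNext m (P (j + 1)) = some (P j))
    (hbot : mwNext m (P 0) = none) (hcard : n ≤ Multiset.card m) :
    mwList m = ((List.range (n + 1)).map P).reverse := by
  simp [mwList, hmax, htop, mwAux_eq_of_chain hbot hnext hcard, List.range_succ]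

end MWChain

theorem IsMS.add_singleton {m : Multiset Seg} (hm : IsMS m) {Δ : Seg} (hΔ : Δ.1 ≤ Δ.2) :
    IsMS (m + {Δ}) := by
  intro q hq
  rcases Multiset.mem_add.mp hq with h | h
  · exact hm q h
  · rwa [Multiset.mem_singleton.mp h]

theorem IsMS.erase {m : Multiset Seg} (hm : IsMS m) (Δ : Seg) : IsMS (m.erase Δ) :=
  fun q hq => hm q (Multiset.mem_of_mem_erase hq)

theorem applyExt_eq :
    ∀ {acc : Multiset Seg} {i : ℤ} {O : List (Option Seg)}, IsMS acc →
      (O.reduceOption : Multiset Seg) ≤ acc →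
      applyExt acc i O = acc - O.reduceOption + plusList i O
  | acc, i, [], _, _ => by simp [applyExt, plusList]
  | acc, i, none :: O, hacc, hle => by
    rw [List.reduceOption_cons_of_none] at hle ⊢
    rw [applyExt, applyExt_eq (hacc.add_singleton le_rfl) (hle.trans (Multiset.le_add_right _ _)),
      ← tsub_add_eq_add_tsub hle, plusList, plusAt, ← Multiset.cons_coe, add_assoc,
      Multiset.singleton_add]
  | acc, i, some Δ :: O, hacc, hle => by
    rw [List.reduceOption_cons_of_some, ← Multiset.cons_coe] at hle ⊢
    have hΔ : Δ ∈ acc := Multiset.mem_of_le hle (Multiset.mem_cons_self _ _)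
    have hle' : (O.reduceOption : Multiset Seg) ≤ acc.erase Δ := by
      rwa [← Multiset.cons_le_cons_iff Δ, Multiset.cons_erase hΔ]
    have hΔ' : Δ.1 ≤ Δ.2 + 1 := by have := hacc Δ hΔ; omega
    rw [applyExt, pushSeg, if_pos hΔ',
      applyExt_eq ((hacc.erase Δ).add_singleton hΔ') (hle'.trans (Multiset.le_add_right _ _)),
      ← tsub_add_eq_add_tsub hle', Multiset.sub_cons, plusList, plusAt, ← Multiset.cons_coe,
      add_assoc, Multiset.singleton_add]

theorem plusList_map_range (g : ℕ → Option Seg) :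
    ∀ (k : ℕ) (i : ℤ),
      plusList i ((List.range k).map g) = (List.range k).map fun t : ℕ => plusAt (i + t) (g t)
  | 0, _ => rfl
  | k + 1, i => by
    rw [List.range_succ_eq_map, List.map_cons, List.map_cons, List.map_map, List.map_map, plusList,
      plusList_map_range (g ∘ Nat.succ) k (i + 1)]
    refine congrArg₂ List.cons (by rw [Nat.cast_zero, add_zero]) (List.map_congr_left fun t _ => ?_)
    rw [Function.comp_apply, Function.comp_apply, Nat.succ_eq_add_one, Nat.cast_succ,
      add_right_comm, add_assoc]

theorem downNbrAux_succ {m : Multiset Seg} (k : ℕ) (p : Seg) :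
    downNbrAux m (k + 1) p = (mwNext m p).bind fun q => (downNbrAux m k q).map (p :: ·) := by
  rw [downNbrAux, mwNext]
  cases msetMax _ <;> rfl

section Extension

variable {m : Multiset Seg} {b : ℤ}

/-- `extSeg m b j` is `Δ̃_{b-1+j}` of the extension process on `m`, with `none` for a void one. -/
def extSeg (m : Multiset Seg) (b : ℤ) (j : ℕ) : Option Seg :=
  (fun o => o.bind (extNext m))^[j] (longEnd m (b - 1))

def extPlus (m : Multiset Seg) (b : ℤ) (j : ℕ) : Seg := plusAt (b - 1 + j) (extSeg m b j)

theorem extSeg_succ (j : ℕ) : extSeg m b (j + 1) = (extSeg m b j).bind (extNext m) :=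
  Function.iterate_succ_apply' _ _ _

theorem extSeg_succ_eq_some_iff {j : ℕ} {Δ' : Seg} :
    extSeg m b (j + 1) = some Δ' ↔ ∃ Δ, extSeg m b j = some Δ ∧ extNext m Δ = some Δ' := by
  rw [extSeg_succ, Option.bind_eq_some_iff]

theorem extAux_eq_map_range :
    ∀ (k : ℕ) (o : Option Seg),
      extAux m k o = (List.range k).map fun t => (fun o => o.bind (extNext m))^[t + 1] o
  | 0, _ => rfl
  | k + 1, o => by
    rw [extAux, extAux_eq_map_range k, List.range_succ_eq_map, List.map_cons, List.map_map]
    rfl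

theorem extList_eq_map_range (a c : ℤ) :
    extList m a c = (List.range ((c - a).toNat + 1)).map (extSeg m a) := by
  rw [extList, extAux_eq_map_range, List.range_succ_eq_map, List.map_cons, List.map_map]
  rfl

theorem extSeg_spec : ∀ {j : ℕ} {Δ : Seg}, extSeg m b j = some Δ → Δ ∈ m ∧ Δ.2 = b - 1 + j
  | 0, Δ, h => by
    obtain ⟨hΔ, hend, -⟩ := longEnd_eq_some_iff.mp h
    exact ⟨hΔ, by simp [hend]⟩
  | j + 1, Δ, h => by
    obtain ⟨p, hp, hnext⟩ := extSeg_succ_eq_some_iff.mp h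
    obtain ⟨hΔ, hend, -⟩ := extNext_eq_some_iff.mp hnext
    have := (extSeg_spec hp).2
    exact ⟨hΔ, by push_cast; omega⟩

theorem extPlus_of_some {j : ℕ} {Δ : Seg} (h : extSeg m b j = some Δ) :
    extPlus m b j = (Δ.1, Δ.2 + 1) := by
  rw [extPlus, h, plusAt]

theorem extPlus_of_none {j : ℕ} (h : extSeg m b j = none) :
    extPlus m b j = (b + j, b + j) := by
  rw [extPlus, h, plusAt, sub_add_eq_add_sub, sub_add_cancel]

theorem extPlus_snd (j : ℕ) : (extPlus m b j).2 = b + j := by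
  cases h : extSeg m b j with
  | none => rw [extPlus_of_none h]
  | some Δ =>
    rw [extPlus_of_some h, (extSeg_spec h).2]
    ring

theorem extPlus_fst_le_snd (hm : IsMS m) (j : ℕ) : (extPlus m b j).1 ≤ (extPlus m b j).2 := by
  cases h : extSeg m b j with
  | none => rw [extPlus_of_none h]
  | some Δ =>
    rw [extPlus_of_some h]
    have := hm Δ (extSeg_spec h).1
    dsimp only
    omega

theorem extPlus_fst_lt_succ (hm : IsMS m) (j : ℕ) :
    (extPlus m b j).1 < (extPlus m b (j + 1)).1 := by
  cases h : extSeg m b (j + 1) with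
  | none =>
    have := extPlus_fst_le_snd hm (b := b) j
    rw [extPlus_snd] at this
    rw [extPlus_of_none h]
    push_cast
    omega
  | some Δ' =>
    obtain ⟨Δ, hΔ, hnext⟩ := extSeg_succ_eq_some_iff.mp h
    rw [extPlus_of_some hΔ, extPlus_of_some h]
    exact (extNext_eq_some_iff.mp hnext).2.2.1.1

theorem fst_le_extPlus_fst (hm : IsMS m) {j : ℕ} {q : Seg} (hq : q ∈ m) (hend : q.2 = b + j)
    (hlt : q.1 < (extPlus m b (j + 1)).1) : q.1 ≤ (extPlus m b j).1 := by
  cases h : extSeg m b j with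
  | none =>
    rw [extPlus_of_none h]
    have := hm q hq
    dsimp only
    omega
  | some Δ =>
    rw [extPlus_of_some h]
    by_contra! hgt
    have hΔq : Prec Δ q :=
      (prec_iff_fst_lt (by rw [(extSeg_spec h).2, hend]; ring) (hm q hq)).mpr hgt
    obtain ⟨Δ', hnext⟩ := Option.ne_none_iff_exists'.mp fun hnone =>
      extNext_eq_none_iff.mp hnone q hq (by rw [(extSeg_spec h).2, hend]; ring) hΔq
    have hsucc : extSeg m b (j + 1) = some Δ' := extSeg_succ_eq_some_iff.mpr ⟨Δ, h, hnext⟩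
    rw [extPlus_of_some hsucc] at hlt
    have := (extNext_eq_some_iff.mp hnext).2.2.2 q hq (by rw [(extSeg_spec h).2, hend]; ring) hΔq
    exact absurd this (not_le.mpr hlt)

theorem extPlus_zero_fst_le {q : Seg} (hq : q ∈ m) (hend : q.2 = b - 1) :
    (extPlus m b 0).1 ≤ q.1 := by
  cases h : extSeg m b 0 with
  | none => exact absurd hend (longEnd_eq_none_iff.mp h q hq)
  | some Δ =>
    rw [extPlus_of_some h]
    exact (longEnd_eq_some_iff.mp h).2.2 q hq hend

theorem exists_mwNext_eq_some (hm : IsMS m) {Δ p : Seg} (hΔ : Δ ∈ m) (hp : p ∈ m)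
    (hend : Δ.2 + 1 = p.2) (hlt : Δ.1 < p.1) :
    ∃ q, mwNext m p = some q ∧ q ∈ m ∧ q.2 + 1 = p.2 ∧ Δ.1 ≤ q.1 := by
  have hΔp : Prec Δ p := (prec_iff_fst_lt hend (hm p hp)).mpr hlt
  obtain ⟨q, hq⟩ := Option.ne_none_iff_exists'.mp fun hnone =>
    mwNext_eq_none_iff.mp hnone Δ hΔ (by omega) hΔp
  obtain ⟨hqm, hqend, -, hmax⟩ := mwNext_eq_some_iff.mp hq
  exact ⟨q, hq, hqm, by omega, hmax Δ hΔ (by omega) hΔp⟩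

theorem downNbrAux_ne_none_of_extSeg (hm : IsMS m) :
    ∀ {j : ℕ} {Δ p : Seg}, extSeg m b j = some Δ → p ∈ m → p.2 = b + j → Δ.1 < p.1 →
      downNbrAux m (j + 1) p ≠ none
  | j, Δ, p, hΔ, hp, hpend, hlt => by
    obtain ⟨hΔm, hΔend⟩ := extSeg_spec hΔ
    obtain ⟨q, hq, hqm, hqend, hle⟩ := exists_mwNext_eq_some hm hΔm hp (by omega) hlt
    rw [downNbrAux_succ, hq, Option.bind_some, ne_eq, Option.map_eq_none_iff]
    cases j with
    | zero => simp [downNbrAux]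
    | succ j =>
      obtain ⟨Δ₀, hΔ₀, hnext⟩ := extSeg_succ_eq_some_iff.mp hΔ
      have hlt₀ := (extNext_eq_some_iff.mp hnext).2.2.1.1
      exact downNbrAux_ne_none_of_extSeg hm hΔ₀ hqm (by push_cast at hpend; omega) (by omega)

theorem fst_le_extPlus_fst_of_downSeqNbr_eq_none (hm : IsMS m) {c : ℤ} (hbc : b ≤ c)
    (hno : downSeqNbr m b c = none) {q : Seg} (hq : q ∈ m) (hend : q.2 = c) :
    q.1 ≤ (extPlus m b (c - b).toNat).1 := by
  have hN : ((c - b).toNat : ℤ) = c - b := Int.toNat_of_nonneg (by omega)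
  cases h : extSeg m b (c - b).toNat with
  | none =>
    rw [extPlus_of_none h]
    have := hm q hq
    dsimp only
    omega
  | some Δ =>
    rw [extPlus_of_some h]
    by_contra! hgt
    obtain ⟨Δ₀, hΔ₀⟩ := exists_shortEnd_eq_some ⟨q, hq, hend⟩
    obtain ⟨hΔ₀m, hΔ₀end, hmax⟩ := shortEnd_eq_some_iff.mp hΔ₀
    have hlong : downNbrAux m ((c - b).toNat + 1) Δ₀ ≠ none :=
      downNbrAux_ne_none_of_extSeg hm h hΔ₀m (by omega) (by have := hmax q hq hend; omega)
    rw [downSeqNbr, hΔ₀, show (c - (b - 1)).toNat = (c - b).toNat + 1 by omega] at hno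
    exact hlong hno

end Extension

theorem izRem_eq_self {m : Multiset Seg} {a c : ℤ} (hno : downSeqNbr m a c = none) :
    izRem a c m = m := by
  unfold izRem
  cases Multiset.card m with
  | zero => rfl
  | succ k => rw [izRemF, hno]

theorem reduceOption_extList_le (m : Multiset Seg) (b c : ℤ) :
    ((extList m b c).reduceOption : Multiset Seg) ≤ m := by
  rw [extList_eq_map_range]
  refine (Multiset.le_iff_subset (Multiset.coe_nodup.mpr ?_)).mpr fun Δ hΔ => ?_
  · rw [List.reduceOption, List.filterMap_map]
    refine List.nodup_range.filterMap fun j j' Δ hj hj' => ?_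
    have := (extSeg_spec hj).2.symm.trans (extSeg_spec hj').2
    omega
  · obtain ⟨j, -, hj⟩ := List.mem_map.mp (List.reduceOption_mem_iff.mp (Multiset.mem_coe.mp hΔ))
    exact (extSeg_spec hj).1

section IZel

variable {m : Multiset Seg} {b c : ℤ}

theorem IZel_eq (hm : IsMS m) (hno : downSeqNbr m b c = none) :
    IZel b c m = m - (extList m b c).reduceOption +
      (List.range ((c - b).toNat + 1)).map (extPlus m b) := by
  rw [IZel, izRem_eq_self hno, applyExt_eq hm (reduceOption_extList_le m b c),
    extList_eq_map_range b c, plusList_map_range]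
  rfl

theorem mem_IZel (hm : IsMS m) (hno : downSeqNbr m b c = none) {r : Seg}
    (hr : r ∈ IZel b c m) : r ∈ m ∨ ∃ j ≤ (c - b).toNat, r = extPlus m b j := by
  rw [IZel_eq hm hno] at hr
  rcases Multiset.mem_add.mp hr with h | h
  · exact Or.inl (Multiset.mem_of_le (Multiset.sub_le_self _ _) h)
  · obtain ⟨j, hj, rfl⟩ := List.mem_map.mp (Multiset.mem_coe.mp h)
    exact Or.inr ⟨j, Nat.lt_succ_iff.mp (List.mem_range.mp hj), rfl⟩

theorem extPlus_mem_IZel (hm : IsMS m) (hno : downSeqNbr m b c = none) {j : ℕ}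
    (hj : j ≤ (c - b).toNat) : extPlus m b j ∈ IZel b c m := by
  rw [IZel_eq hm hno]
  exact Multiset.mem_add.mpr <| Or.inr <| Multiset.mem_coe.mpr <|
    List.mem_map_of_mem (List.mem_range.mpr (Nat.lt_succ_of_le hj))

theorem toNat_sub_le_card_IZel (hm : IsMS m) (hno : downSeqNbr m b c = none) :
    (c - b).toNat ≤ Multiset.card (IZel b c m) := by
  rw [IZel_eq hm hno, Multiset.card_add, Multiset.coe_card, List.length_map, List.length_range]
  omega

theorem msetMax_snd_IZel (hm : IsMS m) (hc : msetMax (m.map Prod.snd) = some c) (hbc : b ≤ c)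
    (hno : downSeqNbr m b c = none) : msetMax ((IZel b c m).map Prod.snd) = some c := by
  have hN : ((c - b).toNat : ℤ) = c - b := Int.toNat_of_nonneg (by omega)
  refine msetMax_eq_some_iff.mpr ⟨Multiset.mem_map.mpr ⟨_, extPlus_mem_IZel hm hno le_rfl, ?_⟩, ?_⟩
  · rw [extPlus_snd]; omega
  · simp only [Multiset.forall_mem_map_iff]
    intro r hr
    rcases mem_IZel hm hno hr with hrm | ⟨j, hj, rfl⟩
    · exact (msetMax_eq_some_iff.mp hc).2 _ (Multiset.mem_map_of_mem _ hrm)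
    · rw [extPlus_snd]; omega

theorem shortEnd_IZel (hm : IsMS m) (hbc : b ≤ c) (hno : downSeqNbr m b c = none) :
    shortEnd (IZel b c m) c = some (extPlus m b (c - b).toNat) := by
  have hN : ((c - b).toNat : ℤ) = c - b := Int.toNat_of_nonneg (by omega)
  refine shortEnd_eq_some_iff.mpr ⟨extPlus_mem_IZel hm hno le_rfl, by rw [extPlus_snd]; omega,
    fun r hr hrend => ?_⟩
  rcases mem_IZel hm hno hr with hrm | ⟨j, hj, rfl⟩
  · exact fst_le_extPlus_fst_of_downSeqNbr_eq_none hm hbc hno hrm hrend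
  · rw [extPlus_snd] at hrend
    rw [show j = (c - b).toNat by omega]

theorem mwNext_IZel_extPlus_succ (hm : IsMS m) (hno : downSeqNbr m b c = none) {j : ℕ}
    (hj : j < (c - b).toNat) :
    mwNext (IZel b c m) (extPlus m b (j + 1)) = some (extPlus m b j) := by
  have hend : (extPlus m b j).2 + 1 = (extPlus m b (j + 1)).2 := by
    rw [extPlus_snd, extPlus_snd]; push_cast; ring
  have hprec : ∀ {r : Seg}, r.2 + 1 = (extPlus m b (j + 1)).2 →
      (Prec r (extPlus m b (j + 1)) ↔ r.1 < (extPlus m b (j + 1)).1) :=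
    fun hr => prec_iff_fst_lt hr (extPlus_fst_le_snd hm _)
  refine mwNext_eq_some_iff.mpr ⟨extPlus_mem_IZel hm hno hj.le, by omega,
    (hprec hend).mpr (extPlus_fst_lt_succ hm j), fun r hr hrend hrp => ?_⟩
  rcases mem_IZel hm hno hr with hrm | ⟨k, -, rfl⟩
  · refine fst_le_extPlus_fst hm hrm ?_ ((hprec (by omega)).mp hrp)
    rw [hrend, extPlus_snd]; push_cast; ring
  · rw [extPlus_snd, extPlus_snd] at hrend
    rw [show k = j by push_cast at hrend; omega]

theorem mwNext_IZel_extPlus_zero (hm : IsMS m) (hno : downSeqNbr m b c = none) :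
    mwNext (IZel b c m) (extPlus m b 0) = none := by
  refine mwNext_eq_none_iff.mpr fun r hr hrend hrp => ?_
  rw [extPlus_snd, Nat.cast_zero, add_zero] at hrend
  have hlt := ((prec_iff_fst_lt (by rw [extPlus_snd]; omega) (extPlus_fst_le_snd hm 0)).mp hrp)
  rcases mem_IZel hm hno hr with hrm | ⟨k, -, rfl⟩
  · exact absurd (extPlus_zero_fst_le hrm hrend) (not_le.mpr hlt)
  · rw [extPlus_snd] at hrend
    omega

end IZel

theorem stmt16_general (m : Multiset Seg) (hm : IsMS m)
    (c : ℤ) (hc : msetMax (m.map Prod.snd) = some c)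
    (b : ℤ) (hbc : b ≤ c) (hno : downSeqNbr m b c = none) :
    mwList (IZel b c m) = (plusList (b - 1) (extList m b c)).reverse := by
  rw [extList_eq_map_range, plusList_map_range]
  exact mwList_eq_of_chain (msetMax_snd_IZel hm hc hbc hno) (shortEnd_IZel hm hbc hno)
    (fun j hj => mwNext_IZel_extPlus_succ hm hno hj) (mwNext_IZel_extPlus_zero hm hno)
    (toNat_sub_le_card_IZel hm hno)

/-- if no downward sequence of minimal linked segments in
neighbors on `m` ranging from `c` to `b-1` exists, then the ordered segments
participating in the MW algorithm for `ℐ^Zel_{[b,c]}(m)` are exactly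
`Δ̃_{c-1}⁺, …, Δ̃_{b-1}⁺`, where `Δ̃_{b-1}, …, Δ̃_{c-1}` are the (possibly void)
segments participating in the extension process, chosen directly from `m`. -/
theorem stmt16 (m : Multiset Seg) (hm : IsMS m) (hne : m ≠ 0)
    (c : ℤ) (hc : msetMax (m.map Prod.snd) = some c)
    (b : ℤ) (hbc : b ≤ c) (hno : downSeqNbr m b c = none) :
    mwList (IZel b c m) = (plusList (b - 1) (extList m b c)).reverse :=
  stmt16_general m hm c hc b hbc hno

end Multiseg
end

section
/- Let m be a multisegment and k ∈ ℤ. Let p_k and p_k′ be multisegments all of whose segments end at k, and p_{k+1} and p_{k+1}′ multisegments all of whose segments end at k+1, with |p_k| ≤ |p_{k+1}| and |p_k′| ≤ |p_{k+1}′|. If p_k and p_{k+1} are minimally linked in m + p_k + p_{k+1}, and p_k′ and p_{k+1}′ are minimally linked in m + p_k′ + p_{k+1}′, then p_k + p_k′ and p_{k+1} + p_{k+1}′ are minimally linked in m + p_k + p_{k+1} + p_k′ + p_{k+1}′. -/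
/-!
Record a multisegment whose segments all end at `k` by the multiset of their starting points.
Linking by mapping from segments ending at `k` to segments ending at `k + 1` then becomes Hall's
condition `#{x ∈ s | a ≤ x} ≤ #{y ∈ t | a < y}` for every threshold `a`, and the order `n₁' < n₁`
becomes the pointwise comparison of the counts `#{x | a ≤ x}`. If `p_k` and `p_{k+1}` are minimally
linked in `m + p_k + p_{k+1}`, Hall's condition is tight at the start `e` of every segment of
`m⟨k⟩`: otherwise adding `[e, k]` to `p_k`, or trading for it the largest start of `p_k` below `e`,
would produce a larger, resp. a smaller, linked multisegment. Tightness at the starts of `m⟨k⟩`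
bounds the counts of every `n ⊆ m⟨k⟩ + p_k + p_k'` linked to `p_{k+1} + p_{k+1}'` by those of
`p_k + p_k'` at every threshold, which yields both maximality and minimality of `p_k + p_k'`.
-/

namespace List

variable {α : Type*}

theorem forall₂_le_antisymm [PartialOrder α] :
    ∀ {l₁ l₂ : List α}, Forall₂ (· ≤ ·) l₁ l₂ → Forall₂ (· ≤ ·) l₂ l₁ → l₁ = l₂
  | _, _, .nil, _ => rfl
  | _, _, .cons h₁ t₁, .cons h₂ t₂ => by rw [le_antisymm h₁ h₂, forall₂_le_antisymm t₁ t₂]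

theorem forall₂_le_of_countP_lt_le [LinearOrder α] :
    ∀ {l₁ l₂ : List α}, l₁.Pairwise (· ≤ ·) → l₂.Pairwise (· ≤ ·) → l₁.length = l₂.length →
      (∀ a, (l₂ : Multiset α).countP (· < a) ≤ (l₁ : Multiset α).countP (· < a)) →
      Forall₂ (· ≤ ·) l₁ l₂
  | [], [], _, _, _, _ => .nil
  | a :: l₁, b :: l₂, h₁, h₂, hlen, h => by
    rw [pairwise_cons] at h₁ h₂
    have hab : a ≤ b := by
      by_contra! hba
      have := h a
      rw [← Multiset.cons_coe, ← Multiset.cons_coe, Multiset.countP_cons, Multiset.countP_cons,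
        if_pos hba, if_neg (lt_irrefl a),
        (Multiset.countP_eq_zero (s := (l₁ : Multiset α))).2 fun x hx => not_lt.2 (h₁.1 x hx)]
        at this
      omega
    refine .cons hab (forall₂_le_of_countP_lt_le h₁.2 h₂.2 (by simpa using hlen) fun t => ?_)
    by_cases hbt : b < t
    · have := h t
      rw [← Multiset.cons_coe, ← Multiset.cons_coe, Multiset.countP_cons, Multiset.countP_cons,
        if_pos hbt, if_pos (hab.trans_lt hbt)] at this
      omega
    · rw [Multiset.countP_eq_zero.2 fun x hx => not_lt.2 ((not_lt.1 hbt).trans (h₂.1 x hx))]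
      exact Nat.zero_le _

end List

namespace Multiset

variable {α : Type*}

theorem Rel.countP_le {r : α → α → Prop} {p q : α → Prop} [DecidablePred p] [DecidablePred q]
    {s t : Multiset α} (h : Rel r s t) (hpq : ∀ a b, r a b → p a → q b) :
    s.countP p ≤ t.countP q := by
  induction h with
  | zero => simp
  | @cons a b _ _ hab _ ih =>
    rw [countP_cons, countP_cons]
    by_cases ha : p a
    · simp [ha, hpq a b hab ha, ih]
    · split_ifs <;> omega

theorem rel_coe_of_forall₂ {r : α → α → Prop} :
    ∀ {l₁ l₂ : List α}, List.Forall₂ r l₁ l₂ → Rel r (l₁ : Multiset α) l₂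
  | _, _, .nil => .zero
  | _, _, .cons h t => (rel_coe_of_forall₂ t).cons h

variable [LinearOrder α]

theorem card_le_card_of_forall_countP_le {s t : Multiset α}
    (h : ∀ a, s.countP (a ≤ ·) ≤ t.countP (a ≤ ·)) : card s ≤ card t := by
  rcases eq_or_ne s 0 with rfl | hs
  · simp
  obtain ⟨x, -, hmin⟩ := exists_min_image id hs
  calc card s = s.countP (x ≤ ·) := (countP_eq_card.2 hmin).symm
    _ ≤ t.countP (x ≤ ·) := h x
    _ ≤ card t := countP_le_card _ _

theorem forall₂_sort_le_iff {s t : Multiset α} (hcard : card s = card t) :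
    List.Forall₂ (· ≤ ·) (s.sort (· ≤ ·)) (t.sort (· ≤ ·)) ↔
      ∀ a, s.countP (a ≤ ·) ≤ t.countP (a ≤ ·) := by
  refine ⟨fun h a => ?_, fun h => ?_⟩
  · simpa only [sort_eq] using (rel_coe_of_forall₂ h).countP_le fun _ _ hxy hax => hax.trans hxy
  refine List.forall₂_le_of_countP_lt_le (pairwise_sort _ _) (pairwise_sort _ _)
    (by simp [hcard]) fun a => ?_
  have hs := card_eq_countP_add_countP (a ≤ ·) s
  have ht := card_eq_countP_add_countP (a ≤ ·) t
  simp only [not_le] at hs ht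
  simp only [sort_eq]
  have := h a
  omega

theorem eq_of_forall_countP_eq {s t : Multiset α}
    (h : ∀ a, s.countP (a ≤ ·) = t.countP (a ≤ ·)) : s = t := by
  have hcard : card s = card t := (card_le_card_of_forall_countP_le fun a => (h a).le).antisymm
    (card_le_card_of_forall_countP_le fun a => (h a).ge)
  rw [← sort_eq s (· ≤ ·), ← sort_eq t (· ≤ ·),
    List.forall₂_le_antisymm ((forall₂_sort_le_iff hcard).2 fun a => (h a).le)
      ((forall₂_sort_le_iff hcard.symm).2 fun a => (h a).ge)]

theorem countP_le_eq_countP_and_lt_add {a x : α} (hax : a ≤ x) (s : Multiset α) :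
    s.countP (a ≤ ·) = s.countP (fun y => a ≤ y ∧ y < x) + s.countP (x ≤ ·) := by
  induction s using Multiset.induction_on with
  | empty => simp
  | cons y s ih =>
    simp only [countP_cons, ih]
    by_cases hxy : x ≤ y
    · simp only [hax.trans hxy, not_lt.2 hxy, hxy, and_false, if_true, if_false, add_zero]
      omega
    · simp only [not_le.1 hxy, hxy, and_true, if_false, add_zero]
      omega

theorem countP_le_of_le_add {d e s : Multiset α} (hle : d ≤ e + s)
    (he : ∀ x ∈ e, d.countP (x ≤ ·) ≤ s.countP (x ≤ ·)) (a : α) :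
    d.countP (a ≤ ·) ≤ s.countP (a ≤ ·) := by
  by_cases hea : ∃ x ∈ e, a ≤ x
  · obtain ⟨x, hx, hmin⟩ := exists_min_image id (s := e.filter (a ≤ ·)) <| by
      obtain ⟨x, hx, hax⟩ := hea
      exact fun h0 => notMem_zero x (h0 ▸ mem_filter.2 ⟨hx, hax⟩)
    rw [mem_filter] at hx
    have hgap : d.countP (fun y => a ≤ y ∧ y < x) ≤ s.countP (fun y => a ≤ y ∧ y < x) := by
      calc _ ≤ (e + s).countP (fun y => a ≤ y ∧ y < x) := countP_le_of_le _ hle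
        _ = s.countP (fun y => a ≤ y ∧ y < x) := by
          rw [countP_add, countP_eq_zero.2 fun y hy hy' => not_le.2 hy'.2
            (hmin y (mem_filter.2 ⟨hy, hy'.1⟩)), zero_add]
    rw [countP_le_eq_countP_and_lt_add hx.2, countP_le_eq_countP_and_lt_add hx.2]
    exact add_le_add hgap (he x hx.1)
  · push Not at hea
    calc d.countP (a ≤ ·) ≤ (e + s).countP (a ≤ ·) := countP_le_of_le _ hle
      _ = s.countP (a ≤ ·) := by
        rw [countP_add, countP_eq_zero.2 fun x hx => not_le.2 (hea x hx), zero_add]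

theorem countP_lt_anti {a b : α} (hab : a ≤ b) (t : Multiset α) :
    t.countP (b < ·) ≤ t.countP (a < ·) := by
  simpa only [countP_eq_card_filter] using
    card_le_card (monotone_filter_right t fun _ hx => hab.trans_lt hx)

end Multiset

namespace Multiseg

open Multiset

section LinearOrder

variable {α : Type*} [LinearOrder α]

def LinksInto (s t : Multiset α) : Prop := ∃ u ≤ t, Rel (· < ·) s u

theorem linksInto_iff_countP {s t : Multiset α} :
    LinksInto s t ↔ ∀ a, s.countP (a ≤ ·) ≤ t.countP (a < ·) := by
  refine ⟨fun ⟨u, hu, hsu⟩ a => (hsu.countP_le fun _ _ hxy hax => hax.trans_lt hxy).trans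
    (countP_le_of_le _ hu), fun h => ?_⟩
  induction s using strongInductionOn generalizing t with
  | ih s ih =>
  rcases eq_or_ne s 0 with rfl | hs
  · exact ⟨0, zero_le _, .zero⟩
  -- match the largest element `x` of `s` with any element of `t` above it
  obtain ⟨x, hx, hmax⟩ := exists_max_image id hs
  obtain ⟨y, hy, hxy⟩ := countP_pos.1 ((countP_pos_of_mem hx le_rfl).trans_le (h x))
  obtain ⟨u, hu, hrel⟩ := @ih (s.erase x) (erase_lt.2 hx) (t.erase y) fun a => by
    by_cases hax : a ≤ x
    · have := h a
      rw [← cons_erase hx, ← cons_erase hy, countP_cons, countP_cons, if_pos hax,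
        if_pos (hax.trans_lt hxy)] at this
      omega
    · rw [countP_eq_zero.2 fun z hz haz => hax (haz.trans (hmax z (mem_of_mem_erase hz)))]
      exact Nat.zero_le _
  refine ⟨y ::ₘ u, (cons_le_cons y hu).trans (cons_erase hy).le, ?_⟩
  rw [← cons_erase hx]
  exact hrel.cons hxy

theorem LinksInto.add {s s' t t' : Multiset α} (h : LinksInto s t) (h' : LinksInto s' t') :
    LinksInto (s + s') (t + t') :=
  let ⟨u, hu, hsu⟩ := h
  let ⟨u', hu', hsu'⟩ := h'
  ⟨u + u', add_le_add hu hu', hsu.add hsu'⟩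

/-- `MinLinked` read off starting points: `A`, `s` and `t` play the starts of `m⟨k⟩`, `n₁`
and `n₂`. -/
structure IsMinLinked (A s t : Multiset α) : Prop where
  le : s ≤ A
  linksInto : LinksInto s t
  card_le : ∀ u ≤ A, LinksInto u t → card u ≤ card s
  not_linksInto : ∀ u ≤ A, card u = card s → u ≠ s →
    (∀ a, s.countP (a ≤ ·) ≤ u.countP (a ≤ ·)) → ¬LinksInto u t

theorem linksInto_cons {r t : Multiset α} {e : α}
    (hr : ∀ a, r.countP (a ≤ ·) ≤ t.countP (a < ·))
    (he : ∀ a ≤ e, r.countP (a ≤ ·) < t.countP (a < ·)) : LinksInto (e ::ₘ r) t :=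
  linksInto_iff_countP.2 fun a => by
    rw [countP_cons]
    split_ifs with ha
    · exact he a ha
    · exact hr a

theorem linksInto_cons_of_forall_le {s t : Multiset α} {e : α}
    (hs : ∀ a, s.countP (a ≤ ·) ≤ t.countP (a < ·)) (he : s.countP (e ≤ ·) < t.countP (e < ·))
    (hge : ∀ x ∈ s, e ≤ x) : LinksInto (e ::ₘ s) t :=
  linksInto_cons hs fun a ha => by
    rw [countP_eq_card.2 fun x hx => ha.trans (hge x hx), ← countP_eq_card.2 hge]
    exact he.trans_le (countP_lt_anti ha t)

theorem linksInto_cons_erase {s t : Multiset α} {p e : α}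
    (hs : ∀ a, s.countP (a ≤ ·) ≤ t.countP (a < ·)) (he : s.countP (e ≤ ·) < t.countP (e < ·))
    (hp : p ∈ s) (hmax : ∀ x ∈ s, x < e → x ≤ p) : LinksInto (e ::ₘ s.erase p) t :=
  linksInto_cons (fun a => (countP_le_of_le _ (erase_le p s)).trans (hs a)) fun a ha => by
    by_cases hap : a ≤ p
    · have := hs a
      rw [← cons_erase hp, countP_cons, if_pos hap] at this
      omega
    · calc (s.erase p).countP (a ≤ ·) = (s.erase p).countP (e ≤ ·) :=
            countP_congr rfl fun x hx => propext ⟨fun hax => not_lt.1 fun hxe =>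
              hap (hax.trans (hmax x (mem_of_mem_erase hx) hxe)), ha.trans⟩
        _ ≤ s.countP (e ≤ ·) := countP_le_of_le _ (erase_le p s)
        _ < t.countP (e < ·) := he
        _ ≤ t.countP (a < ·) := countP_lt_anti ha t

theorem IsMinLinked.countP_eq {E s t : Multiset α} (h : IsMinLinked (E + s) s t) {e : α}
    (he : e ∈ E) : s.countP (e ≤ ·) = t.countP (e < ·) := by
  have hlink := linksInto_iff_countP.1 h.linksInto
  refine (hlink e).antisymm (not_lt.1 fun hlt => ?_)
  have hcons : ∀ r ≤ s, e ::ₘ r ≤ E + s := fun r hr => by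
    rw [← singleton_add]
    exact add_le_add (singleton_le.2 he) hr
  by_cases hbelow : ∃ p ∈ s, p < e
  · -- trading the largest element `p < e` of `s` for `e` keeps it linked and raises it
    obtain ⟨p, hp, hpmax⟩ := exists_max_image id (s := s.filter (· < e)) <| by
      obtain ⟨p, hp, hpe⟩ := hbelow
      exact fun h0 => notMem_zero p (h0 ▸ mem_filter.2 ⟨hp, hpe⟩)
    rw [mem_filter] at hp
    have hs : s = p ::ₘ s.erase p := (cons_erase hp.1).symm
    refine h.not_linksInto _ (hcons _ (erase_le p s))
      (by rw [hs, card_cons, card_cons, erase_cons_head]) ?_ ?_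
      (linksInto_cons_erase hlink hlt hp.1 fun x hx hxe => hpmax x (mem_filter.2 ⟨hx, hxe⟩))
    · rw [hs, Ne, erase_cons_head, cons_inj_left]
      exact hp.2.ne'
    · intro a
      rw [hs, erase_cons_head, countP_cons, countP_cons]
      split_ifs with h₁ h₂ <;> first | omega | exact absurd (h₁.trans hp.2.le) h₂
  · push Not at hbelow
    simpa using h.card_le _ (hcons s le_rfl) (linksInto_cons_of_forall_le hlink hlt hbelow)

theorem IsMinLinked.countP_le_of_linksInto {E s s' t t' u : Multiset α}
    (h : IsMinLinked (E + s) s t) (h' : IsMinLinked (E + s') s' t') (hu : u ≤ E + s + s')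
    (hlink : LinksInto u (t + t')) (a : α) : u.countP (a ≤ ·) ≤ (s + s').countP (a ≤ ·) := by
  refine countP_le_of_le_add (e := E) (by rwa [← add_assoc]) (fun e he => ?_) a
  rw [countP_add, h.countP_eq he, h'.countP_eq he, ← countP_add]
  exact linksInto_iff_countP.1 hlink e

theorem IsMinLinked.add {E s s' t t' : Multiset α} (h : IsMinLinked (E + s) s t)
    (h' : IsMinLinked (E + s') s' t') : IsMinLinked (E + s + s') (s + s') (t + t') where
  le := by rw [add_assoc]; exact le_add_self
  linksInto := h.linksInto.add h'.linksInto
  card_le u hu hlink := card_le_card_of_forall_countP_le (h.countP_le_of_linksInto h' hu hlink)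
  not_linksInto u hu _ hne hdom hlink := hne <| eq_of_forall_countP_eq fun a =>
    (h.countP_le_of_linksInto h' hu hlink a).antisymm (hdom a)

end LinearOrder

theorem exists_eq_map_of_forall_snd_eq {n : Multiset Seg} {c : ℤ} (h : ∀ Δ ∈ n, Δ.2 = c) :
    ∃ X : Multiset ℤ, n = X.map (·, c) :=
  ⟨n.map Prod.fst, by
    rw [map_map]
    exact (map_id' n).symm.trans (map_congr rfl fun Δ hΔ => Prod.ext rfl (h Δ hΔ))⟩

theorem le_map_pair_iff {n : Multiset Seg} {E : Multiset ℤ} {c : ℤ} :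
    n ≤ E.map (·, c) ↔ ∃ X ≤ E, n = X.map (·, c) := by
  refine ⟨fun hn => ?_, fun ⟨X, hX, hn⟩ => hn ▸ map_le_map hX⟩
  obtain ⟨X, rfl⟩ := exists_eq_map_of_forall_snd_eq (c := c) fun Δ hΔ => by
    obtain ⟨x, -, rfl⟩ := mem_map.1 (mem_of_le hn hΔ)
    rfl
  exact ⟨X, (map_le_map_iff (Prod.mk_left_injective c)).1 hn, rfl⟩

theorem forall_le_map_pair_iff {E : Multiset ℤ} {c : ℤ} {φ : Multiset Seg → Prop} :
    (∀ n ≤ E.map (·, c), φ n) ↔ ∀ X ≤ E, φ (X.map (·, c)) := by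
  simp only [le_map_pair_iff]
  exact ⟨fun h X hX => h _ ⟨X, hX, rfl⟩, fun h _ ⟨X, hX, hn⟩ => hn ▸ h X hX⟩

theorem endAt_add (m n : Multiset Seg) (i : ℤ) : endAt (m + n) i = endAt m i + endAt n i :=
  filter_add _ _ _

theorem endAt_map_pair_self (X : Multiset ℤ) (c : ℤ) : endAt (X.map (·, c)) c = X.map (·, c) :=
  filter_eq_self.2 (by simp)

theorem endAt_map_pair_of_ne (X : Multiset ℤ) {c i : ℤ} (h : c ≠ i) :
    endAt (X.map (·, c)) i = 0 :=
  filter_eq_nil.2 (by simp [h])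

theorem linkedByMapping_map_pair_iff {k : ℤ} {P Q : Multiset ℤ} (hQ : ∀ b ∈ Q, b ≤ k + 1) :
    LinkedByMapping (P.map (·, k)) (Q.map (·, k + 1)) ↔ LinksInto P Q := by
  simp only [LinkedByMapping, le_map_pair_iff]
  constructor
  · rintro ⟨_, ⟨u, hu, rfl⟩, hrel⟩
    exact ⟨u, hu, rel_map.1 hrel |>.mono fun _ _ _ _ h => h.1⟩
  · rintro ⟨u, hu, hrel⟩
    exact ⟨_, ⟨u, hu, rfl⟩, rel_map.2 <| hrel.mono fun _ _ b hb hab =>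
      ⟨hab, lt_add_one k, hQ b (mem_of_le hu hb)⟩⟩

theorem msLtStarts_map_pair_iff {X P : Multiset ℤ} {c : ℤ} (h : card X = card P) :
    MSLtStarts (X.map (·, c)) (P.map (·, c)) ↔
      X ≠ P ∧ ∀ a, P.countP (a ≤ ·) ≤ X.countP (a ≤ ·) := by
  have hsort : ∀ Y : Multiset ℤ, startsSorted (Y.map (·, c)) = Y.sort (· ≤ ·) := fun Y => by
    simp [startsSorted, map_map]
  have hinj : X.sort (· ≤ ·) = P.sort (· ≤ ·) ↔ X = P :=
    ⟨fun he => by rw [← sort_eq X (· ≤ ·), he, sort_eq], congrArg _⟩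
  rw [MSLtStarts, hsort, hsort, Ne, hinj, forall₂_sort_le_iff h.symm]

theorem minLinked_map_pair_iff {M : Multiset Seg} {k : ℤ} {E P Q : Multiset ℤ}
    (hE : endAt M k = E.map (·, k)) (hQ : Q.map (·, k + 1) ≤ endAt M (k + 1))
    (hQk : ∀ b ∈ Q, b ≤ k + 1) :
    MinLinked M (k + 1) (P.map (·, k)) (Q.map (·, k + 1)) ↔ IsMinLinked E P Q := by
  simp only [MinLinked, add_sub_cancel_right, hE, forall_le_map_pair_iff, card_map,
    map_le_map_iff (Prod.mk_left_injective k), linkedByMapping_map_pair_iff hQk, hQ, true_and]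
  constructor
  · rintro ⟨hle, hlink, hcard, hmin⟩
    exact ⟨hle, hlink, hcard, fun X hX hc hne hdom =>
      hmin X hX hc ((msLtStarts_map_pair_iff hc).2 ⟨hne, hdom⟩)⟩
  · rintro ⟨hle, hlink, hcard, hmin⟩
    exact ⟨hle, hlink, hcard, fun X hX hc hlt =>
      hmin X hX hc ((msLtStarts_map_pair_iff hc).1 hlt).1 ((msLtStarts_map_pair_iff hc).1 hlt).2⟩

theorem stmt18_general (m : Multiset Seg) (k : ℤ)
    (pk pk' pk1 pk1' : Multiset Seg)
    (hv3 : IsMS pk1) (hv4 : IsMS pk1')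
    (hek : ∀ Δ ∈ pk, Δ.2 = k) (hek' : ∀ Δ ∈ pk', Δ.2 = k)
    (hek1 : ∀ Δ ∈ pk1, Δ.2 = k + 1) (hek1' : ∀ Δ ∈ pk1', Δ.2 = k + 1)
    (h1 : MinLinked (m + pk + pk1) (k + 1) pk pk1)
    (h2 : MinLinked (m + pk' + pk1') (k + 1) pk' pk1') :
    MinLinked (m + pk + pk1 + pk' + pk1') (k + 1) (pk + pk') (pk1 + pk1') := by
  obtain ⟨E, hE⟩ := exists_eq_map_of_forall_snd_eq (n := endAt m k) fun _ hΔ => (mem_filter.1 hΔ).2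
  obtain ⟨P, rfl⟩ := exists_eq_map_of_forall_snd_eq hek
  obtain ⟨P', rfl⟩ := exists_eq_map_of_forall_snd_eq hek'
  obtain ⟨Q, rfl⟩ := exists_eq_map_of_forall_snd_eq hek1
  obtain ⟨Q', rfl⟩ := exists_eq_map_of_forall_snd_eq hek1'
  have hQ : ∀ b ∈ Q, b ≤ k + 1 := fun b hb => hv3 _ (mem_map_of_mem _ hb)
  have hQ' : ∀ b ∈ Q', b ≤ k + 1 := fun b hb => hv4 _ (mem_map_of_mem _ hb)
  have hpool : ∀ (M : Multiset Seg) (X Y : Multiset ℤ),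
      endAt (M + X.map (·, k) + Y.map (·, k + 1)) k = endAt M k + X.map (·, k) := fun M X Y => by
    simp [endAt_add, endAt_map_pair_self, endAt_map_pair_of_ne _ (by omega : k + 1 ≠ k)]
  have g1 := (minLinked_map_pair_iff (E := E + P) (by rw [hpool, hE, map_add]) h1.2.1 hQ).1 h1
  have g2 := (minLinked_map_pair_iff (E := E + P') (by rw [hpool, hE, map_add]) h2.2.1 hQ').1 h2
  simp only [← map_add]
  refine (minLinked_map_pair_iff ?_ ?_ ?_).2 (g1.add g2)
  · rw [hpool, hpool, hE, map_add, map_add]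
  · simp only [endAt_add, endAt_map_pair_self, endAt_map_pair_of_ne _ (by omega : k ≠ k + 1),
      map_add, add_assoc, zero_add]
    exact le_add_left _ _
  · simpa [or_imp, forall_and] using ⟨hQ, hQ'⟩

/-- gluing minimally linked multisegments. -/
theorem stmt18 (m : Multiset Seg) (hm : IsMS m) (k : ℤ)
    (pk pk' pk1 pk1' : Multiset Seg)
    (hv1 : IsMS pk) (hv2 : IsMS pk') (hv3 : IsMS pk1) (hv4 : IsMS pk1')
    (hek : ∀ Δ ∈ pk, Δ.2 = k) (hek' : ∀ Δ ∈ pk', Δ.2 = k)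
    (hek1 : ∀ Δ ∈ pk1, Δ.2 = k + 1) (hek1' : ∀ Δ ∈ pk1', Δ.2 = k + 1)
    (hc1 : pk.card ≤ pk1.card) (hc2 : pk'.card ≤ pk1'.card)
    (h1 : MinLinked (m + pk + pk1) (k + 1) pk pk1)
    (h2 : MinLinked (m + pk' + pk1') (k + 1) pk' pk1') :
    MinLinked (m + pk + pk1 + pk' + pk1') (k + 1) (pk + pk') (pk1 + pk1') :=
  stmt18_general m k pk pk' pk1 pk1' hv3 hv4 hek hek' hek1 hek1' h1 h2

end Multiseg
end
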